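/- If n ≡ 2 (mod 3) and n ≥ 2, then for every edge e of G_{n,2}, γ_t(G_{n,2} − e) = γ_t(G_{n,2}); together with the existence of a pair of edges whose removal increases γ_t, this gives b_t(G_{n,2}) = 2. -/

import Mathlib

open SimpleGraph

/-- The grid graph `G_{n,m}`, the Cartesian (box) product of paths `P_n` and `P_m`. -/
def gridGraph (n m : ℕ) : SimpleGraph (Fin n × Fin m) :=
  (pathGraph n) □ (pathGraph m)

/-- `D` is a total dominating set of `G`: every vertex has a neighbor in `D`. -/
def IsTotalDomSet {V : Type*} (G : SimpleGraph V) (D : Set V) : Prop :=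
  ∀ v : V, ∃ u ∈ D, G.Adj v u

/-- The total domination number of `G`. -/
noncomputable def totalDomNum {V : Type*} [Fintype V] (G : SimpleGraph V) : ℕ :=
  sInf {k | ∃ D : Finset V, IsTotalDomSet G ↑D ∧ D.card = k}

/-- The total bondage number: the least number of edges whose removal increases
the total domination number. -/
noncomputable def totalBondage {V : Type*} [Fintype V] (G : SimpleGraph V) : ℕ :=
  sInf {k | ∃ F : Finset (Sym2 V), ↑F ⊆ G.edgeSet ∧ F.card = k ∧
    totalDomNum (G.deleteEdges ↑F) > totalDomNum G}

/-!
Every vertex of `P_n □ P_2` has degree at most `3`, so a total dominating set of any spanning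
subgraph has at least `2n / 3` vertices, that is at least `2k + 2` when `n = 3k + 2`.

Conversely, after deleting any one edge a total dominating set of that size survives. Split the
columns into blocks `{3s, 3s + 1, 3s + 2}` and take both vertices of column `3s + 1` for the
blocks `s < t` and of column `3s` for the blocks `s ≥ t`. The switching block `t` can be chosen so
that the deleted edge has no end in the set, unless it is a rail edge (inside a row) between
columns `3s` and `3s + 1`. In that case block `s` is replaced by a horizontal domino on these two
columns in the other row.

Deleting the two rail edges between columns `0` and `1` makes the rung at column `0` a component
`K₂`: both its vertices lie in every total dominating set and dominate nothing else, and the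
degree count on the other `2n - 2` vertices forces `2k + 3` vertices.
-/

open Finset

namespace IsTotalDomSet

variable {V : Type*} {G H : SimpleGraph V} {D : Set V}

lemma mono (hD : IsTotalDomSet G D) (h : G ≤ H) : IsTotalDomSet H D := fun v ↦
  let ⟨u, hu, hvu⟩ := hD v; ⟨u, hu, h hvu⟩

lemma mem_of_forall_adj_eq (hD : IsTotalDomSet G D) {a b : V}
    (ha : ∀ v, G.Adj a v → v = b) : b ∈ D := by
  obtain ⟨u, hu, hau⟩ := hD a
  exact ha u hau ▸ hu

lemma deleteEdges_of_forall_notMem (hD : IsTotalDomSet G D) {F : Set (Sym2 V)}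
    (hF : ∀ e ∈ F, ∀ v ∈ e, v ∉ D) : IsTotalDomSet (G.deleteEdges F) D := by
  intro v
  obtain ⟨u, hu, hvu⟩ := hD v
  exact ⟨u, hu, (deleteEdges_adj ..).2 ⟨hvu, fun he ↦ hF _ he u (Sym2.mem_mk_right v u) hu⟩⟩

lemma deleteEdges_singleton (hD : IsTotalDomSet G D) {a b : V}
    (ha : ∃ u ∈ D, u ≠ b ∧ G.Adj a u) (hb : ∃ u ∈ D, u ≠ a ∧ G.Adj b u) :
    IsTotalDomSet (G.deleteEdges {s(a, b)}) D := by
  intro v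
  by_cases hv : v = a ∨ v = b
  · obtain ⟨u, hu, hne, hvu⟩ : ∃ u ∈ D, s(v, u) ≠ s(a, b) ∧ G.Adj v u := by
      rcases hv with rfl | rfl
      · obtain ⟨u, hu, hub, hvu⟩ := ha
        exact ⟨u, hu, by simp [hub, hvu.ne.symm], hvu⟩
      · obtain ⟨u, hu, hua, hvu⟩ := hb
        exact ⟨u, hu, by simp [hua, hvu.ne.symm], hvu⟩
    exact ⟨u, hu, (deleteEdges_adj ..).2 ⟨hvu, hne⟩⟩
  · obtain ⟨u, hu, hvu⟩ := hD v
    refine ⟨u, hu, (deleteEdges_adj ..).2 ⟨hvu, fun he ↦ hv ?_⟩⟩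
    exact Sym2.mem_iff.1 (Set.mem_singleton_iff.1 he ▸ Sym2.mem_mk_left v u)

end IsTotalDomSet

section Counting

variable {V : Type*} {G : SimpleGraph V}

lemma card_le_mul_card_of_forall_exists_adj [G.LocallyFinite] {Δ : ℕ}
    (hΔ : ∀ v, G.degree v ≤ Δ) {D T : Finset V} (hT : ∀ v ∈ T, ∃ u ∈ D, G.Adj v u) :
    T.card ≤ Δ * D.card := by
  classical
  calc T.card ≤ (D.biUnion fun u ↦ G.neighborFinset u).card := card_le_card fun v hv ↦ by
        obtain ⟨u, hu, hvu⟩ := hT v hv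
        exact mem_biUnion.2 ⟨u, hu, (mem_neighborFinset ..).2 hvu.symm⟩
    _ ≤ ∑ u ∈ D, G.degree u := card_biUnion_le
    _ ≤ ∑ _u ∈ D, Δ := sum_le_sum fun u _ ↦ hΔ u
    _ = Δ * D.card := by rw [sum_const, smul_eq_mul, mul_comm]

variable [Fintype V]

lemma totalDomNum_le {D : Finset V} (hD : IsTotalDomSet G D) : totalDomNum G ≤ D.card :=
  Nat.sInf_le ⟨D, hD, rfl⟩

lemma le_totalDomNum {m : ℕ} (hne : ∃ D : Finset V, IsTotalDomSet G D)
    (h : ∀ D : Finset V, IsTotalDomSet G D → m ≤ D.card) : m ≤ totalDomNum G := by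
  obtain ⟨D, hD⟩ := hne
  exact le_csInf ⟨D.card, D, hD, rfl⟩ fun _ ⟨D', hD', hcard⟩ ↦ hcard ▸ h D' hD'

lemma totalBondage_eq_two
    (h₁ : ∀ e ∈ G.edgeSet, totalDomNum (G.deleteEdges {e}) = totalDomNum G)
    (h₂ : ∃ F : Finset (Sym2 V), ↑F ⊆ G.edgeSet ∧ F.card = 2 ∧
      totalDomNum (G.deleteEdges ↑F) > totalDomNum G) :
    totalBondage G = 2 := by
  refine le_antisymm (Nat.sInf_le h₂) (le_csInf ⟨2, h₂⟩ ?_)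
  rintro m ⟨F, hFG, rfl, hF⟩
  by_contra! hlt
  obtain hF0 | hF1 := Nat.lt_succ_iff_lt_or_eq.1 hlt
  · simp [card_eq_zero.1 (Nat.lt_one_iff.1 hF0)] at hF
  · obtain ⟨e, rfl⟩ := card_eq_one.1 hF1
    rw [coe_singleton, h₁ e (hFG (by simp))] at hF
    exact lt_irrefl _ hF

end Counting

instance (n : ℕ) : DecidableRel (pathGraph n).Adj :=
  fun _ _ ↦ decidable_of_iff' _ pathGraph_adj

instance (n m : ℕ) (v : Fin n × Fin m) : Fintype ((gridGraph n m).neighborSet v) :=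
  boxProdFintypeNeighborSet v

lemma pathGraph_degree_le_two {n : ℕ} (i : Fin n) : (pathGraph n).degree i ≤ 2 := by
  match n, i with
  | 1, i => exact (degree_lt_card_verts (G := pathGraph 1) i).le.trans (by simp)
  | n + 2, i =>
    calc (pathGraph (n + 2)).degree i ≤ (cycleGraph (n + 2)).degree i :=
          degree_le_of_le pathGraph_le_cycleGraph
      _ ≤ 2 := cycleGraph_degree_two_le ▸ card_le_two

lemma gridGraph_degree_le_three {n : ℕ} (v : Fin n × Fin 2) :
    (gridGraph n 2).degree v ≤ 3 := by
  have h₁ := pathGraph_degree_le_two v.1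
  have h₂ := degree_lt_card_verts (G := pathGraph 2) v.2
  simp only [Fintype.card_fin] at h₂
  have h := degree_boxProd (G := pathGraph n) (H := pathGraph 2) v
  change (gridGraph n 2).degree v = _ at h
  omega

lemma gridGraph_two_adj {n : ℕ} {a b : Fin n × Fin 2} :
    (gridGraph n 2).Adj a b ↔
      (a.2.val = b.2.val ∧ (a.1.val + 1 = b.1.val ∨ b.1.val + 1 = a.1.val)) ∨
      (a.1.val = b.1.val ∧ a.2.val ≠ b.2.val) := by
  have := a.2.isLt
  have := b.2.isLt
  simp only [gridGraph, boxProd_adj, pathGraph_adj, Fin.ext_iff]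
  omega

lemma IsTotalDomSet.two_mul_le_three_mul_card {n : ℕ} {D : Finset (Fin n × Fin 2)}
    (hD : IsTotalDomSet (gridGraph n 2) D) : 2 * n ≤ 3 * D.card := by
  simpa [mul_comm] using card_le_mul_card_of_forall_exists_adj gridGraph_degree_le_three
    (T := univ) fun v _ ↦ hD v

section GridTwoModThree

variable {k : ℕ}

def switchSet (k t : ℕ) : Finset (Fin (3 * k + 2) × Fin 2) :=
  univ.filter fun v ↦ (v.1.val / 3 < t ∧ v.1.val % 3 = 1) ∨ (t ≤ v.1.val / 3 ∧ v.1.val % 3 = 0)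

def dominoSet (k t : ℕ) (r : Fin 2) : Finset (Fin (3 * k + 2) × Fin 2) :=
  univ.filter fun v ↦ (v.1.val / 3 < t ∧ v.1.val % 3 = 1) ∨ (t < v.1.val / 3 ∧ v.1.val % 3 = 0) ∨
    (v.1.val / 3 = t ∧ v.1.val % 3 ≠ 2 ∧ v.2 = r)

lemma card_switchSet_le (t : ℕ) : (switchSet k t).card ≤ 2 * k + 2 := by
  calc (switchSet k t).card ≤ (univ : Finset (Fin (k + 1) × Fin 2)).card := by
        refine card_le_card_of_injOn (fun v ↦ (⟨v.1.val / 3, by omega⟩, v.2))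
          (fun _ _ ↦ mem_coe.2 (mem_univ _)) ?_
        intro v hv w hw hvw
        simp only [switchSet, mem_coe, mem_filter, mem_univ, true_and, Prod.ext_iff,
          Fin.ext_iff] at hv hw hvw ⊢
        omega
    _ = 2 * k + 2 := by rw [card_univ, Fintype.card_prod, Fintype.card_fin, Fintype.card_fin]; ring

lemma card_dominoSet_le (t : ℕ) (r : Fin 2) : (dominoSet k t r).card ≤ 2 * k + 2 := by
  calc (dominoSet k t r).card ≤ (univ : Finset (Fin (k + 1) × Fin 2)).card := by
        refine card_le_card_of_injOn
          (fun v ↦ (⟨v.1.val / 3, by omega⟩,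
            ⟨if v.1.val / 3 = t then v.1.val % 3 % 2 else v.2.val, by split_ifs <;> omega⟩))
          (fun _ _ ↦ mem_coe.2 (mem_univ _)) ?_
        intro v hv w hw hvw
        simp only [dominoSet, mem_coe, mem_filter, mem_univ, true_and, Fin.ext_iff] at hv hw
        simp only [Prod.ext_iff, Fin.ext_iff] at hvw ⊢
        split_ifs at hvw <;> omega
    _ = 2 * k + 2 := by rw [card_univ, Fintype.card_prod, Fintype.card_fin, Fintype.card_fin]; ring

lemma isTotalDomSet_switchSet (t : ℕ) :
    IsTotalDomSet (gridGraph (3 * k + 2) 2) (switchSet k t) := by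
  rintro ⟨⟨i, hi⟩, ⟨j, hj⟩⟩
  obtain ⟨c, hc, r, hr, hmem, hadj⟩ : ∃ c, ∃ hc : c < 3 * k + 2, ∃ r, ∃ hr : r < 2,
      (c / 3 < t ∧ c % 3 = 1 ∨ t ≤ c / 3 ∧ c % 3 = 0) ∧
      (j = r ∧ (i + 1 = c ∨ c + 1 = i) ∨ i = c ∧ j ≠ r) := by
    rcases Nat.lt_or_ge (i / 3) t with hit | hit <;>
      have := Nat.mod_lt i (show 3 > 0 by norm_num) <;> interval_cases hm : i % 3
    · exact ⟨i + 1, by omega, j, hj, by omega⟩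
    · exact ⟨i, hi, 1 - j, by omega, by omega⟩
    · exact ⟨i - 1, by omega, j, hj, by omega⟩
    · exact ⟨i, hi, 1 - j, by omega, by omega⟩
    · exact ⟨i - 1, by omega, j, hj, by omega⟩
    · exact ⟨i + 1, by omega, j, hj, by omega⟩
  exact ⟨(⟨c, hc⟩, ⟨r, hr⟩), by simpa [switchSet] using hmem, gridGraph_two_adj.2 hadj⟩

lemma isTotalDomSet_dominoSet (t : ℕ) (r : Fin 2) :
    IsTotalDomSet (gridGraph (3 * k + 2) 2) (dominoSet k t r) := by
  rintro ⟨⟨i, hi⟩, ⟨j, hj⟩⟩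
  obtain ⟨c, hc, r', hr', hmem, hadj⟩ : ∃ c, ∃ hc : c < 3 * k + 2, ∃ r', ∃ hr' : r' < 2,
      (c / 3 < t ∧ c % 3 = 1 ∨ t < c / 3 ∧ c % 3 = 0 ∨ c / 3 = t ∧ c % 3 ≠ 2 ∧ r' = r.val) ∧
      (j = r' ∧ (i + 1 = c ∨ c + 1 = i) ∨ i = c ∧ j ≠ r') := by
    have := r.isLt
    rcases lt_trichotomy (i / 3) t with hit | hit | hit <;>
      have := Nat.mod_lt i (show 3 > 0 by norm_num) <;> interval_cases hm : i % 3
    · exact ⟨i + 1, by omega, j, hj, by omega⟩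
    · exact ⟨i, hi, 1 - j, by omega, by omega⟩
    · exact ⟨i - 1, by omega, j, hj, by omega⟩
    · by_cases hjr : j = r.val
      · exact ⟨i + 1, by omega, j, hj, by omega⟩
      · exact ⟨i, hi, r, r.isLt, by omega⟩
    · by_cases hjr : j = r.val
      · exact ⟨i - 1, by omega, j, hj, by omega⟩
      · exact ⟨i, hi, r, r.isLt, by omega⟩
    · exact ⟨i + 1, by omega, j, hj, by omega⟩
    · exact ⟨i, hi, 1 - j, by omega, by omega⟩
    · exact ⟨i - 1, by omega, j, hj, by omega⟩
    · exact ⟨i + 1, by omega, j, hj, by omega⟩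
  exact ⟨(⟨c, hc⟩, ⟨r', hr'⟩), by simpa [dominoSet, Fin.ext_iff] using hmem,
    gridGraph_two_adj.2 hadj⟩

lemma exists_card_le_isTotalDomSet_deleteEdge {a b : Fin (3 * k + 2) × Fin 2}
    (hab : (gridGraph (3 * k + 2) 2).Adj a b) :
    ∃ D : Finset (Fin (3 * k + 2) × Fin 2), D.card ≤ 2 * k + 2 ∧
      IsTotalDomSet ((gridGraph (3 * k + 2) 2).deleteEdges {s(a, b)}) D := by
  wlog hle : a.1.val ≤ b.1.val generalizing a b
  · rw [Sym2.eq_swap]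
    exact this hab.symm (by omega)
  have hab' := gridGraph_two_adj.1 hab
  by_cases hdom : a.2 = b.2 ∧ a.1.val % 3 = 0
  · obtain ⟨r, hr⟩ := exists_ne a.2
    refine ⟨dominoSet k (a.1.val / 3) r, card_dominoSet_le _ _,
      (isTotalDomSet_dominoSet _ _).deleteEdges_singleton ⟨(a.1, r), ?_⟩ ⟨(b.1, r), ?_⟩⟩ <;>
    simp only [dominoSet, mem_coe, mem_filter, mem_univ, true_and, ne_eq, Prod.ext_iff,
      gridGraph_two_adj, Fin.ext_iff, and_true] at hr hdom hab' ⊢ <;>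
    omega
  · obtain ⟨t, ht⟩ : ∃ t, ∀ v ∈ s(a, b), v ∉ switchSet k t := by
      simp only [Sym2.mem_iff, forall_eq_or_imp, forall_eq, switchSet, mem_filter, mem_univ,
        true_and, Fin.ext_iff] at hab' hdom ⊢
      have := Nat.mod_lt a.1.val (show 3 > 0 by norm_num)
      interval_cases hm : a.1.val % 3
      · exact ⟨a.1.val / 3 + 1, by omega⟩
      · exact ⟨a.1.val / 3, by omega⟩
      · exact ⟨a.1.val / 3 + 2, by omega⟩
    exact ⟨switchSet k t, card_switchSet_le t,
      (isTotalDomSet_switchSet t).deleteEdges_of_forall_notMem (by rintro _ rfl; exact ht)⟩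

lemma totalDomNum_eq_of_le_gridGraph {H : SimpleGraph (Fin (3 * k + 2) × Fin 2)}
    (hH : H ≤ gridGraph (3 * k + 2) 2)
    (hD : ∃ D : Finset (Fin (3 * k + 2) × Fin 2), D.card ≤ 2 * k + 2 ∧ IsTotalDomSet H D) :
    totalDomNum H = 2 * k + 2 := by
  obtain ⟨D, hcard, hD⟩ := hD
  refine le_antisymm ((totalDomNum_le hD).trans hcard) ?_
  refine le_totalDomNum ⟨D, hD⟩ fun D' hD' ↦ ?_
  have := (hD'.mono hH).two_mul_le_three_mul_card
  omega

lemma totalDomNum_gridGraph : totalDomNum (gridGraph (3 * k + 2) 2) = 2 * k + 2 :=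
  totalDomNum_eq_of_le_gridGraph le_rfl ⟨_, card_switchSet_le 0, isTotalDomSet_switchSet 0⟩

lemma totalDomNum_gridGraph_deleteEdge {e : Sym2 (Fin (3 * k + 2) × Fin 2)}
    (he : e ∈ (gridGraph (3 * k + 2) 2).edgeSet) :
    totalDomNum ((gridGraph (3 * k + 2) 2).deleteEdges {e}) =
      totalDomNum (gridGraph (3 * k + 2) 2) := by
  rw [totalDomNum_gridGraph]
  induction e using Sym2.ind with
  | _ a b =>
    exact totalDomNum_eq_of_le_gridGraph (deleteEdges_le _)
      (exists_card_le_isTotalDomSet_deleteEdge he)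

def leftRailEdges (k : ℕ) : Finset (Sym2 (Fin (3 * k + 2) × Fin 2)) :=
  {s((⟨0, by omega⟩, 0), (⟨1, by omega⟩, 0)), s((⟨0, by omega⟩, 1), (⟨1, by omega⟩, 1))}

lemma leftRailEdges_subset_edgeSet :
    ↑(leftRailEdges k) ⊆ (gridGraph (3 * k + 2) 2).edgeSet := by
  simp [leftRailEdges, Set.insert_subset_iff, gridGraph_two_adj]

lemma card_leftRailEdges : (leftRailEdges k).card = 2 := by
  simp [leftRailEdges, card_insert_of_notMem, Prod.ext_iff]

lemma IsTotalDomSet.two_mul_add_three_le_card {D : Finset (Fin (3 * k + 2) × Fin 2)}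
    (hD : IsTotalDomSet ((gridGraph (3 * k + 2) 2).deleteEdges ↑(leftRailEdges k)) D) :
    2 * k + 3 ≤ D.card := by
  set a : Fin (3 * k + 2) × Fin 2 := (⟨0, by omega⟩, 0)
  set b : Fin (3 * k + 2) × Fin 2 := (⟨0, by omega⟩, 1)
  have hrung : ∀ x y, ((gridGraph (3 * k + 2) 2).deleteEdges ↑(leftRailEdges k)).Adj x y →
      (x = a ∨ x = b) → (y = a ∨ y = b) := by
    rintro ⟨⟨i, hi⟩, ⟨j, hj⟩⟩ ⟨⟨c, hc⟩, ⟨r, hr⟩⟩ hxy hx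
    simp only [deleteEdges_adj, gridGraph_two_adj, leftRailEdges, coe_insert, coe_singleton,
      Set.mem_insert_iff, Set.mem_singleton_iff, Sym2.eq_iff, a, b, Prod.ext_iff,
      Fin.ext_iff] at hxy hx ⊢
    omega
  have ha : ∀ v, _ → v = b := fun v hav ↦
    (hrung a v hav (.inl rfl)).resolve_left hav.ne.symm
  have hb : ∀ v, _ → v = a := fun v hbv ↦
    (hrung b v hbv (.inr rfl)).resolve_right hbv.ne.symm
  have hab : ({a, b} : Finset _) ⊆ D := insert_subset_iff.2
    ⟨mem_coe.1 (hD.mem_of_forall_adj_eq hb), singleton_subset_iff.2 (hD.mem_of_forall_adj_eq ha)⟩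
  have hrest :
      ∀ v ∈ univ \ {a, b}, ∃ u ∈ D \ {a, b}, (gridGraph (3 * k + 2) 2).Adj v u := by
    intro v hv
    obtain ⟨u, hu, hvu⟩ := hD v
    refine ⟨u, mem_sdiff.2 ⟨hu, fun hu' ↦ ?_⟩, deleteEdges_le _ hvu⟩
    simp only [mem_sdiff, mem_univ, true_and, mem_insert, mem_singleton] at hv hu'
    exact hv (hrung u v hvu.symm hu')
  have hcount := card_le_mul_card_of_forall_exists_adj gridGraph_degree_le_three hrest
  have hcard_ab : ({a, b} : Finset _).card = 2 := card_pair (by simp [a, b])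
  rw [card_sdiff_of_subset (subset_univ _), card_sdiff_of_subset hab, hcard_ab, card_univ,
    Fintype.card_prod, Fintype.card_fin, Fintype.card_fin] at hcount
  omega

lemma totalDomNum_gridGraph_lt_deleteEdges_leftRailEdges :
    totalDomNum (gridGraph (3 * k + 2) 2) <
      totalDomNum ((gridGraph (3 * k + 2) 2).deleteEdges ↑(leftRailEdges k)) := by
  rw [totalDomNum_gridGraph]
  refine le_totalDomNum ⟨univ, fun v ↦ ⟨(v.1, v.2.rev), by simp, ?_⟩⟩ fun _ ↦
    IsTotalDomSet.two_mul_add_three_le_card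
  obtain ⟨⟨i, hi⟩, ⟨j, hj⟩⟩ := v
  simp only [deleteEdges_adj, gridGraph_two_adj, leftRailEdges, coe_insert, coe_singleton,
    Set.mem_insert_iff, Set.mem_singleton_iff, Sym2.eq_iff, Prod.ext_iff, Fin.ext_iff,
    Fin.val_rev, Fin.val_zero, Fin.val_one, true_and]
  omega

end GridTwoModThree

theorem total_bondage_grid_two_two_mod_three_general (n : ℕ) (h : n % 3 = 2) :
    (∀ e ∈ (gridGraph n 2).edgeSet,
      totalDomNum ((gridGraph n 2).deleteEdges {e}) = totalDomNum (gridGraph n 2)) ∧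
    (∃ F : Finset (Sym2 (Fin n × Fin 2)), ↑F ⊆ (gridGraph n 2).edgeSet ∧ F.card = 2 ∧
      totalDomNum ((gridGraph n 2).deleteEdges ↑F) > totalDomNum (gridGraph n 2)) ∧
    totalBondage (gridGraph n 2) = 2 := by
  obtain ⟨k, rfl⟩ : ∃ k, n = 3 * k + 2 := ⟨n / 3, by omega⟩
  have h₁ : ∀ e ∈ (gridGraph (3 * k + 2) 2).edgeSet, _ :=
    fun _ ↦ totalDomNum_gridGraph_deleteEdge
  refine ⟨h₁, ?h₂, totalBondage_eq_two h₁ ?h₂⟩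
  exact ⟨leftRailEdges k, leftRailEdges_subset_edgeSet, card_leftRailEdges,
    totalDomNum_gridGraph_lt_deleteEdges_leftRailEdges⟩

theorem total_bondage_grid_two_two_mod_three (n : ℕ) (hn : 2 ≤ n) (h : n % 3 = 2) :
    (∀ e ∈ (gridGraph n 2).edgeSet,
      totalDomNum ((gridGraph n 2).deleteEdges {e}) = totalDomNum (gridGraph n 2)) ∧
    (∃ F : Finset (Sym2 (Fin n × Fin 2)), ↑F ⊆ (gridGraph n 2).edgeSet ∧ F.card = 2 ∧
      totalDomNum ((gridGraph n 2).deleteEdges ↑F) > totalDomNum (gridGraph n 2)) ∧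
    totalBondage (gridGraph n 2) = 2 :=
  total_bondage_grid_two_two_mod_three_general n h
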